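/- arXiv:2604.10892 — 2 statements merged into one kernel-verified Lean document; each statement's English description precedes it below -/
import Mathlib

section
/- Under the local coalition-switch rule, each accepted switch strictly decreases the maximum of the two affected coalition costs, and therefore strictly decreases the lexicographically sorted (descending) vector of all coalition costs; since costs take finitely many values for a finite robot set, the switching process terminates in finitely many steps. -/
/-- A single accepted coalition switch: robot `i` leaves coalition `j` and joins
coalition `j'`, all other coalitions unchanged, subject to the switch condition
max{χ(R_{j'}∪{i}), χ(R_{j_i}\{i})} < max{χ(R_{j_i}), χ(R_{j'})}. -/
def Step {N J : Type*} [DecidableEq N] (χ : Finset N → ℝ)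
    (S S' : J → Finset N) : Prop :=
  ∃ (i : N) (j j' : J), j ≠ j' ∧ i ∈ S j ∧
    S' j = (S j).erase i ∧ S' j' = insert i (S j') ∧
    (∀ l, l ≠ j → l ≠ j' → S' l = S l) ∧
    max (χ (insert i (S j'))) (χ ((S j).erase i)) < max (χ (S j)) (χ (S j'))

/-- Each accepted switch strictly decreases the maximum of the two affected
coalition costs, and with finitely many robots and subtasks the switching
process terminates: there is no infinite sequence of accepted switches. -/
theorem switching_decreases_and_terminates
    {N J : Type*} [Fintype N] [DecidableEq N] [Fintype J] [DecidableEq J]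
    (χ : Finset N → ℝ) (hχ : ∀ R, 0 ≤ χ R) :
    (∀ (S S' : J → Finset N) (i : N) (j j' : J),
        j ≠ j' → i ∈ S j → S' j = (S j).erase i → S' j' = insert i (S j') →
        (∀ l, l ≠ j → l ≠ j' → S' l = S l) →
        max (χ (insert i (S j'))) (χ ((S j).erase i)) < max (χ (S j)) (χ (S j')) →
        max (χ (S' j)) (χ (S' j')) < max (χ (S j)) (χ (S j'))) ∧
    ¬ ∃ f : ℕ → (J → Finset N), ∀ n, Step χ (f n) (f (n + 1)) := by
  classical
  refine ⟨?_, ?_⟩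
  · intro S S' i j j' hjj hij hSj hSj' _ hlt
    rw [hSj, hSj', max_comm]
    exact hlt
  · rintro ⟨f, hf⟩
    set V : Finset ℝ := Finset.univ.image χ with hV
    have hmem : ∀ R : Finset N, χ R ∈ V := fun R =>
      Finset.mem_image_of_mem χ (Finset.mem_univ R)
    set r : ℝ → ℕ := fun x => (V.filter (fun v => v < x)).card with hrdef
    have hr : ∀ x y : ℝ, x ∈ V → x < y → r x < r y := by
      intro x y hx hxy
      apply Finset.card_lt_card
      rw [Finset.ssubset_iff_of_subset]
      · exact ⟨x, Finset.mem_filter.mpr ⟨hx, hxy⟩, by simp⟩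
      · intro v hv
        rw [Finset.mem_filter] at hv ⊢
        exact ⟨hv.1, hv.2.trans hxy⟩
    set m : (J → Finset N) → ℕ := fun S => ∑ l, 3 ^ (r (χ (S l))) with hmdef
    have key : ∀ S S', Step χ S S' → m S' < m S := by
      rintro S S' ⟨i, j, j', hjj, hij, hSj, hSj', hother, hlt⟩
      have split : ∀ g : J → ℕ,
          ∑ l, g l = g j + (g j' + ∑ l ∈ (Finset.univ.erase j).erase j', g l) := by
        intro g
        rw [Finset.add_sum_erase _ g
            (Finset.mem_erase.mpr ⟨Ne.symm hjj, Finset.mem_univ j'⟩),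
          Finset.add_sum_erase _ g (Finset.mem_univ j)]
      have hrest : ∑ l ∈ (Finset.univ.erase j).erase j', 3 ^ (r (χ (S' l)))
          = ∑ l ∈ (Finset.univ.erase j).erase j', 3 ^ (r (χ (S l))) := by
        apply Finset.sum_congr rfl
        intro l hl
        rw [Finset.mem_erase, Finset.mem_erase] at hl
        rw [hother l hl.2.1 hl.1]
      set M := max (χ (S j)) (χ (S j')) with hMdef
      have ha' : χ (S' j) < M := by
        rw [hSj]
        exact lt_of_le_of_lt (le_max_right _ _) hlt
      have hb' : χ (S' j') < M := by
        rw [hSj']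
        exact lt_of_le_of_lt (le_max_left _ _) hlt
      have hra' : r (χ (S' j)) < r M := hr _ _ (hmem _) ha'
      have hrb' : r (χ (S' j')) < r M := hr _ _ (hmem _) hb'
      have hMle : 3 ^ (r M) ≤ 3 ^ (r (χ (S j))) + 3 ^ (r (χ (S j'))) := by
        have h1 : 1 ≤ 3 ^ (r (χ (S j))) := Nat.one_le_pow _ _ (by norm_num)
        have h2 : 1 ≤ 3 ^ (r (χ (S j'))) := Nat.one_le_pow _ _ (by norm_num)
        rcases max_choice (χ (S j)) (χ (S j')) with h | h
        · rw [hMdef, h]; omega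
        · rw [hMdef, h]; omega
      have hk : 1 ≤ r M := by omega
      have hpow : 3 ^ (r M) = 3 ^ (r M - 1) * 3 := by
        rw [← pow_succ]
        congr 1
        omega
      have hAle : 3 ^ (r (χ (S' j))) ≤ 3 ^ (r M - 1) :=
        Nat.pow_le_pow_right (by norm_num) (by omega)
      have hBle : 3 ^ (r (χ (S' j'))) ≤ 3 ^ (r M - 1) :=
        Nat.pow_le_pow_right (by norm_num) (by omega)
      have hone : 1 ≤ 3 ^ (r M - 1) := Nat.one_le_pow _ _ (by norm_num)
      have hAB : 3 ^ (r (χ (S' j))) + 3 ^ (r (χ (S' j')))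
          < 3 ^ (r (χ (S j))) + 3 ^ (r (χ (S j'))) := by omega
      have e1 := split (fun l => 3 ^ (r (χ (S' l))))
      have e2 := split (fun l => 3 ^ (r (χ (S l))))
      simp only [hmdef]
      omega
    have hdesc : ∀ n, m (f n) + n ≤ m (f 0) := by
      intro n
      induction n with
      | zero => simp
      | succ n ih =>
        have := key _ _ (hf n)
        omega
    have := hdesc (m (f 0) + 1)
    omega
end

section
/- A coalition switch satisfying the switch condition does not increase the global objective max_j χ(R_j) over all coalitions, and if the switched pair attains the global maximum before the switch, the multiset of coalition costs strictly decreases in the max-lexicographic order. -/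
/-
The switch pushes both switched costs strictly below the pair's old maximum and leaves every other
cost unchanged, so no cost rises above the old global maximum `M`. If the pair attained `M`, the
switch removes at least one occurrence of `M` from the cost multiset and adds none; for descending
lists bounded by `M`, having fewer leading `M`s means being lexicographically smaller.
-/

open scoped Classical

/-- The descending-sorted list of coalition costs of a scheme. -/
noncomputable def costListDesc {N J : Type*} [Fintype J] (χ : Finset N → ℝ)
    (S : J → Finset N) : List ℝ :=
  (Finset.univ.val.map (fun j => χ (S j))).sort (· ≥ ·)

theorem List.lex_lt_of_count_lt {α : Type*} [LinearOrder α] {M : α} :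
    ∀ {l₁ l₂ : List α}, l₁.Pairwise (· ≥ ·) → l₂.Pairwise (· ≥ ·) →
      (∀ x ∈ l₁, x ≤ M) → (∀ x ∈ l₂, x ≤ M) → l₁.count M < l₂.count M →
      List.Lex (· < ·) l₁ l₂
  | _, [], _, _, _, _, hcount => by simp at hcount
  | l₁, b :: t₂, h₁, h₂, hM₁, hM₂, hcount => by
    -- A descending list containing its upper bound `M` starts with `M`.
    have hb : b = M := by
      rcases List.mem_cons.mp (List.count_pos_iff.mp ((Nat.zero_le _).trans_lt hcount)) with h | h
      · exact h.symm
      · exact le_antisymm (hM₂ b List.mem_cons_self) (List.rel_of_pairwise_cons h₂ h)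
    subst hb
    match l₁, h₁, hM₁, hcount with
    | [], _, _, _ => exact List.Lex.nil
    | a :: t₁, h₁, hM₁, hcount =>
      rcases (hM₁ a List.mem_cons_self).lt_or_eq with ha | rfl
      · exact List.Lex.rel ha
      · refine List.Lex.cons (List.lex_lt_of_count_lt h₁.of_cons h₂.of_cons
          (fun x hx => hM₁ x (List.mem_cons_of_mem _ hx))
          (fun x hx => hM₂ x (List.mem_cons_of_mem _ hx)) ?_)
        simpa [List.count_cons_self] using hcount

theorem Multiset.lex_sort_ge_of_count_lt {α : Type*} [LinearOrder α] {s t : Multiset α} {M : α}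
    (hs : ∀ x ∈ s, x ≤ M) (ht : ∀ x ∈ t, x ≤ M) (hcount : s.count M < t.count M) :
    List.Lex (· < ·) (s.sort (· ≥ ·)) (t.sort (· ≥ ·)) := by
  refine List.lex_lt_of_count_lt (Multiset.pairwise_sort _ _) (Multiset.pairwise_sort _ _)
    (fun x hx => hs x ((Multiset.mem_sort _).mp hx))
    (fun x hx => ht x ((Multiset.mem_sort _).mp hx)) ?_
  rwa [← Multiset.coe_count, ← Multiset.coe_count, Multiset.sort_eq, Multiset.sort_eq]

section Switch

variable {J α : Type*} [LinearOrder α] {f g : J → α} {j j' : J}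

theorem le_of_switch_of_forall_le (hother : ∀ l, l ≠ j → l ≠ j' → g l = f l)
    (hlt : max (g j) (g j') < max (f j) (f j')) {M : α} (hf : ∀ l, f l ≤ M) (l : J) :
    g l ≤ M := by
  have hpair : max (g j) (g j') < M := hlt.trans_le (max_le (hf j) (hf j'))
  by_cases hj : l = j
  · subst hj; exact (le_max_left _ _).trans hpair.le
  by_cases hj' : l = j'
  · subst hj'; exact (le_max_right _ _).trans hpair.le
  rw [hother l hj hj']
  exact hf l

theorem filter_eq_ssubset_of_switch [Fintype J] (hother : ∀ l, l ≠ j → l ≠ j' → g l = f l)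
    (hlt : max (g j) (g j') < max (f j) (f j')) {M : α} (hM : max (f j) (f j') = M) :
    Finset.univ.filter (fun l => M = g l) ⊂ Finset.univ.filter (fun l => M = f l) := by
  subst hM
  have hj : g j < max (f j) (f j') := (le_max_left _ _).trans_lt hlt
  have hj' : g j' < max (f j) (f j') := (le_max_right _ _).trans_lt hlt
  refine (Finset.ssubset_iff_of_subset fun l hl => ?_).mpr ?_
  · simp only [Finset.mem_filter, Finset.mem_univ, true_and] at hl ⊢
    have hlj : l ≠ j := by rintro rfl; exact hj.ne' hl
    have hlj' : l ≠ j' := by rintro rfl; exact hj'.ne' hl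
    rwa [← hother l hlj hlj']
  · rcases max_choice (f j) (f j') with h | h
    · exact ⟨j, by simp [h], by simpa [h] using hj.ne'⟩
    · exact ⟨j', by simp [h], by simpa [h] using hj'.ne'⟩

variable [Fintype J] [Nonempty J]

theorem sup'_le_sup'_of_switch (hother : ∀ l, l ≠ j → l ≠ j' → g l = f l)
    (hlt : max (g j) (g j') < max (f j) (f j')) :
    Finset.univ.sup' Finset.univ_nonempty g ≤ Finset.univ.sup' Finset.univ_nonempty f :=
  Finset.sup'_le _ _ fun l _ =>
    le_of_switch_of_forall_le hother hlt (fun l => Finset.le_sup' f (Finset.mem_univ l)) l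

theorem lex_sort_ge_of_switch (hother : ∀ l, l ≠ j → l ≠ j' → g l = f l)
    (hlt : max (g j) (g j') < max (f j) (f j'))
    (hmax : max (f j) (f j') = Finset.univ.sup' Finset.univ_nonempty f) :
    List.Lex (· < ·) ((Finset.univ.val.map g).sort (· ≥ ·))
      ((Finset.univ.val.map f).sort (· ≥ ·)) := by
  have hf (l : J) : f l ≤ max (f j) (f j') := hmax ▸ Finset.le_sup' f (Finset.mem_univ l)
  refine Multiset.lex_sort_ge_of_count_lt
    (Multiset.forall_mem_map_iff.mpr fun l _ => le_of_switch_of_forall_le hother hlt hf l)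
    (Multiset.forall_mem_map_iff.mpr fun l _ => hf l) ?_
  rw [Multiset.count_map, Multiset.count_map]
  exact Finset.card_lt_card (filter_eq_ssubset_of_switch hother hlt rfl)

end Switch

theorem switch_global_max_and_lex_general
    {N J : Type*} [DecidableEq N] [Fintype J]
    [Nonempty J]
    (χ : Finset N → ℝ)
    (S S' : J → Finset N) (i : N) (j j' : J)
    (hSj : S' j = (S j).erase i) (hSj' : S' j' = insert i (S j'))
    (hother : ∀ l, l ≠ j → l ≠ j' → S' l = S l)
    (hcond : max (χ (insert i (S j'))) (χ ((S j).erase i))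
              < max (χ (S j)) (χ (S j'))) :
    Finset.univ.sup' Finset.univ_nonempty (fun l => χ (S' l))
      ≤ Finset.univ.sup' Finset.univ_nonempty (fun l => χ (S l)) ∧
    (max (χ (S j)) (χ (S j'))
        = Finset.univ.sup' Finset.univ_nonempty (fun l => χ (S l)) →
      List.Lex (· < ·) (costListDesc χ S') (costListDesc χ S)) := by
  have hother' : ∀ l, l ≠ j → l ≠ j' → χ (S' l) = χ (S l) := fun l hj hj' =>
    congrArg χ (hother l hj hj')
  have hlt : max (χ (S' j)) (χ (S' j')) < max (χ (S j)) (χ (S j')) := by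
    rwa [hSj, hSj', max_comm]
  exact ⟨sup'_le_sup'_of_switch hother' hlt, lex_sort_ge_of_switch hother' hlt⟩

/-- A coalition switch satisfying the switch condition does not increase the
global objective max_j χ(R_j); moreover, if the switched pair attains the
global maximum before the switch, the descending-sorted vector of coalition
costs strictly decreases lexicographically. -/
theorem switch_global_max_and_lex
    {N J : Type*} [Fintype N] [DecidableEq N] [Fintype J] [DecidableEq J]
    [Nonempty J]
    (χ : Finset N → ℝ) (hχ : ∀ R, 0 ≤ χ R)
    (S S' : J → Finset N) (i : N) (j j' : J)
    (hne : j ≠ j') (hi : i ∈ S j)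
    (hSj : S' j = (S j).erase i) (hSj' : S' j' = insert i (S j'))
    (hother : ∀ l, l ≠ j → l ≠ j' → S' l = S l)
    (hcond : max (χ (insert i (S j'))) (χ ((S j).erase i))
              < max (χ (S j)) (χ (S j'))) :
    Finset.univ.sup' Finset.univ_nonempty (fun l => χ (S' l))
      ≤ Finset.univ.sup' Finset.univ_nonempty (fun l => χ (S l)) ∧
    (max (χ (S j)) (χ (S j'))
        = Finset.univ.sup' Finset.univ_nonempty (fun l => χ (S l)) →
      List.Lex (· < ·) (costListDesc χ S') (costListDesc χ S)) :=
  switch_global_max_and_lex_general χ S S' i j j' hSj hSj' hother hcond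
end
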